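/- arXiv:2203.14493 — 5 statements merged into one kernel-verified Lean document; each statement's English description precedes it below -/
import Mathlib

section
/- Fix y, x ∈ ℝ³. There exists a unique symmetric 4×4 real matrix C (whose entries are bilinear in y and x) such that ⟨y, R(w) x⟩ = wᵀ C w for all w ∈ ℝ⁴. Defining D := (‖y‖² + ‖x‖²) I₄ − 2C, one has ‖y − R(w) x‖² = wᵀ D w for every w ∈ ℝ⁴ with ‖w‖ = 1, and D is positive semidefinite. -/
open Matrix RealInnerProductSpace

/-- The rotation matrix associated to a quaternion `w = (w₁, w₂, w₃, w₄) ∈ ℝ⁴`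
(here `w 0 = w₁`, …, `w 3 = w₄`). -/
def quatRot (w : Fin 4 → ℝ) : Matrix (Fin 3) (Fin 3) ℝ :=
  !![w 0 ^ 2 + w 1 ^ 2 - w 2 ^ 2 - w 3 ^ 2, 2 * (w 1 * w 2 - w 0 * w 3), 2 * (w 1 * w 3 + w 0 * w 2);
     2 * (w 1 * w 2 + w 0 * w 3), w 0 ^ 2 + w 2 ^ 2 - w 1 ^ 2 - w 3 ^ 2, 2 * (w 2 * w 3 - w 0 * w 1);
     2 * (w 1 * w 3 - w 0 * w 2), 2 * (w 2 * w 3 + w 0 * w 1), w 0 ^ 2 + w 3 ^ 2 - w 1 ^ 2 - w 2 ^ 2]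

noncomputable def Cmat (y x : EuclideanSpace ℝ (Fin 3)) : Matrix (Fin 4) (Fin 4) ℝ :=
  !![y 0 * x 0 + y 1 * x 1 + y 2 * x 2, y 2 * x 1 - y 1 * x 2, y 0 * x 2 - y 2 * x 0, y 1 * x 0 - y 0 * x 1;
     y 2 * x 1 - y 1 * x 2, y 0 * x 0 - y 1 * x 1 - y 2 * x 2, y 0 * x 1 + y 1 * x 0, y 0 * x 2 + y 2 * x 0;
     y 0 * x 2 - y 2 * x 0, y 0 * x 1 + y 1 * x 0, y 1 * x 1 - y 0 * x 0 - y 2 * x 2, y 1 * x 2 + y 2 * x 1;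
     y 1 * x 0 - y 0 * x 1, y 0 * x 2 + y 2 * x 0, y 1 * x 2 + y 2 * x 1, y 2 * x 2 - y 0 * x 0 - y 1 * x 1]

lemma Cmat_symm (y x : EuclideanSpace ℝ (Fin 3)) : (Cmat y x).IsSymm := by
  rw [Matrix.IsSymm]
  ext i j
  fin_cases i <;> fin_cases j <;> simp [Cmat]

lemma key (y x : EuclideanSpace ℝ (Fin 3)) (w : Fin 4 → ℝ) :
    ⟪y, Matrix.toEuclideanLin (quatRot w) x⟫ = w ⬝ᵥ (Cmat y x).mulVec w := by
  have h : (Matrix.toEuclideanLin (quatRot w) x : Fin 3 → ℝ) = (quatRot w).mulVec x := rfl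
  simp only [PiLp.inner_apply, RCLike.inner_apply, conj_trivial, h]
  simp [Matrix.mulVec, dotProduct, quatRot, Cmat, Fin.sum_univ_three, Fin.sum_univ_four,
    Matrix.vecHead, Matrix.vecTail]
  ring

lemma quad_ext {n : Type*} [Fintype n] [DecidableEq n] {C C' : Matrix n n ℝ}
    (hC : C.IsSymm) (hC' : C'.IsSymm)
    (h : ∀ w, w ⬝ᵥ C.mulVec w = w ⬝ᵥ C'.mulVec w) : C = C' := by
  ext i j
  have e1 := h (Pi.single i 1 + Pi.single j 1)
  have e2 := h (Pi.single i 1)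
  have e3 := h (Pi.single j 1)
  simp [Matrix.mulVec_add, dotProduct_add, add_dotProduct,
    single_dotProduct, Matrix.mulVec_single] at e1 e2 e3
  have s1 := hC.apply i j
  have s2 := hC'.apply i j
  linarith

lemma normsq_eq {k : ℕ} (z : EuclideanSpace ℝ (Fin k)) : ‖z‖ ^ 2 = ∑ i, z i ^ 2 := by
  rw [← real_inner_self_eq_norm_sq]
  simp only [PiLp.inner_apply, RCLike.inner_apply, conj_trivial, sq, mul_comm]

lemma quatRot_mulVec_normsq (w : Fin 4 → ℝ) (v : Fin 3 → ℝ) :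
    ∑ i, ((quatRot w).mulVec v) i ^ 2 = (∑ i, w i ^ 2) ^ 2 * ∑ i, v i ^ 2 := by
  simp [Matrix.mulVec, dotProduct, quatRot, Fin.sum_univ_three, Fin.sum_univ_four,
    Matrix.vecHead, Matrix.vecTail]
  ring

lemma normR (x : EuclideanSpace ℝ (Fin 3)) (w : Fin 4 → ℝ) :
    ‖Matrix.toEuclideanLin (quatRot w) x‖ ^ 2 = (∑ i, w i ^ 2) ^ 2 * ‖x‖ ^ 2 := by
  have h : (Matrix.toEuclideanLin (quatRot w) x : Fin 3 → ℝ) = (quatRot w).mulVec x := rfl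
  rw [normsq_eq, normsq_eq]
  simp only [h]
  exact quatRot_mulVec_normsq w x

/-- For fixed `y, x ∈ ℝ³` there is a unique symmetric `C ∈ ℝ⁴ˣ⁴` with
`⟨y, R(w) x⟩ = wᵀ C w` for all `w ∈ ℝ⁴`; and for
`D := (‖y‖² + ‖x‖²) I₄ − 2C` one has `‖y − R(w) x‖² = wᵀ D w` on the unit sphere,
with `D` positive semidefinite. -/
theorem quatRot_quadratic_form (y x : EuclideanSpace ℝ (Fin 3)) :
    (∃! C : Matrix (Fin 4) (Fin 4) ℝ, C.IsSymm ∧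
      ∀ w : Fin 4 → ℝ, ⟪y, Matrix.toEuclideanLin (quatRot w) x⟫ = w ⬝ᵥ C.mulVec w) ∧
    (∀ C : Matrix (Fin 4) (Fin 4) ℝ, C.IsSymm →
      (∀ w : Fin 4 → ℝ, ⟪y, Matrix.toEuclideanLin (quatRot w) x⟫ = w ⬝ᵥ C.mulVec w) →
      ∀ D : Matrix (Fin 4) (Fin 4) ℝ,
        D = (‖y‖ ^ 2 + ‖x‖ ^ 2) • (1 : Matrix (Fin 4) (Fin 4) ℝ) - (2 : ℝ) • C →
        (∀ w : EuclideanSpace ℝ (Fin 4), ‖w‖ = 1 →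
          ‖y - Matrix.toEuclideanLin (quatRot w) x‖ ^ 2 = w ⬝ᵥ D.mulVec w) ∧
        D.PosSemidef) := by
  constructor
  · refine ⟨Cmat y x, ⟨Cmat_symm y x, key y x⟩, ?_⟩
    rintro C ⟨hCs, hCq⟩
    exact quad_ext hCs (Cmat_symm y x) (fun w => by rw [← hCq w, key])
  · intro C hCs hCq D hD
    have hDq : ∀ v : Fin 4 → ℝ, v ⬝ᵥ D.mulVec v =
        (‖y‖ ^ 2 + ‖x‖ ^ 2) * (∑ i, v i ^ 2) -
          2 * ⟪y, Matrix.toEuclideanLin (quatRot v) x⟫ := by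
      intro v
      rw [hCq v, hD]
      simp [Matrix.sub_mulVec, Matrix.smul_mulVec, Matrix.one_mulVec,
        dotProduct_sub, dotProduct_smul, dotProduct,
        Fin.sum_univ_four, smul_eq_mul]
      ring
    constructor
    · intro w hw
      have hs : ∑ i, (w : Fin 4 → ℝ) i ^ 2 = 1 := by
        have := normsq_eq w
        rw [hw] at this
        simpa using this.symm
      rw [@norm_sub_sq_real, hDq w, hs, normR x w, hs]
      ring
    · rw [Matrix.posSemidef_iff_dotProduct_mulVec]
      constructor
      · rw [Matrix.IsHermitian, Matrix.conjTranspose_eq_transpose_of_trivial, hD,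
          Matrix.transpose_sub, Matrix.transpose_smul, Matrix.transpose_smul,
          Matrix.transpose_one, hCs.eq]
      · intro v
        have hsD := hDq v
        set s : ℝ := ∑ i, v i ^ 2 with hsdef
        have hs0 : 0 ≤ s := Finset.sum_nonneg fun i _ => sq_nonneg _
        rcases eq_or_lt_of_le hs0 with h0 | hpos
        · have hv : v = 0 := by
            funext i
            have := (Finset.sum_eq_zero_iff_of_nonneg
              (fun i _ => sq_nonneg (v i))).mp h0.symm i (Finset.mem_univ i)
            exact pow_eq_zero_iff (two_ne_zero) |>.mp this
          simp [hv]
        · have hmul : s * (v ⬝ᵥ D.mulVec v) =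
              ‖(s • y : EuclideanSpace ℝ (Fin 3)) - Matrix.toEuclideanLin (quatRot v) x‖ ^ 2 := by
            rw [@norm_sub_sq_real, norm_smul, real_inner_smul_left, hsD, normR x v]
            simp [abs_of_nonneg hs0, mul_pow]
            ring
          have hnn : 0 ≤ s * (v ⬝ᵥ D.mulVec v) := hmul ▸ sq_nonneg _
          have : 0 ≤ star v ⬝ᵥ D.mulVec v := by
            simpa using nonneg_of_mul_nonneg_right hnn hpos
          simpa using this
end

section
/- Fix y, x ∈ ℝ³ with ‖y‖ = ‖x‖ = 1, let C be the unique symmetric 4×4 real matrix with ⟨y, R(w) x⟩ = wᵀ C w for all w ∈ ℝ⁴, and let D := 2 I₄ − 2C. Then D has eigenvalues 4, 4, 0, 0; equivalently, the characteristic polynomial of D is λ²(λ − 4)² (equivalently, C is symmetric with C² = I₄ and trace C = 0, i.e., C has eigenvalues 1, 1, −1, −1). -/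
open Matrix RealInnerProductSpace Polynomial

theorem my_det_fin_four {R : Type*} [CommRing R] (A : Matrix (Fin 4) (Fin 4) R) :
    A.det =
      A 0 0 * (A 1 1 * A 2 2 * A 3 3 - A 1 1 * A 2 3 * A 3 2 - A 1 2 * A 2 1 * A 3 3 +
        A 1 2 * A 2 3 * A 3 1 + A 1 3 * A 2 1 * A 3 2 - A 1 3 * A 2 2 * A 3 1) -
      A 0 1 * (A 1 0 * A 2 2 * A 3 3 - A 1 0 * A 2 3 * A 3 2 - A 1 2 * A 2 0 * A 3 3 +
        A 1 2 * A 2 3 * A 3 0 + A 1 3 * A 2 0 * A 3 2 - A 1 3 * A 2 2 * A 3 0) +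
      A 0 2 * (A 1 0 * A 2 1 * A 3 3 - A 1 0 * A 2 3 * A 3 1 - A 1 1 * A 2 0 * A 3 3 +
        A 1 1 * A 2 3 * A 3 0 + A 1 3 * A 2 0 * A 3 1 - A 1 3 * A 2 1 * A 3 0) -
      A 0 3 * (A 1 0 * A 2 1 * A 3 2 - A 1 0 * A 2 2 * A 3 1 - A 1 1 * A 2 0 * A 3 2 +
        A 1 1 * A 2 2 * A 3 0 + A 1 2 * A 2 0 * A 3 1 - A 1 2 * A 2 1 * A 3 0) := by
  rw [Matrix.det_succ_row_zero, Fin.sum_univ_four]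
  have h23 : (Fin.succ 2 : Fin 4) = 3 := rfl
  have h12 : (Fin.succ 1 : Fin 4) = 2 := rfl
  have h01 : (Fin.succ 0 : Fin 4) = 1 := rfl
  have hv3 : ((3 : Fin 4) : ℕ) = 3 := rfl
  have hc0 : (Fin.castSucc 0 : Fin 4) = 0 := rfl
  have hc1 : (Fin.castSucc 1 : Fin 4) = 1 := rfl
  have hc2 : (Fin.castSucc 2 : Fin 4) = 2 := rfl
  simp only [Matrix.det_fin_three, Matrix.submatrix_apply, Fin.succAbove, Fin.lt_def, h23, h12,
    h01, hv3, hc0, hc1, hc2]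
  norm_num
  ring


set_option maxHeartbeats 2000000 in
/-- For normalized points `y, x` (`‖y‖ = ‖x‖ = 1`), if `M` is the symmetric matrix of the
quadratic form `w ↦ ⟨y, R(w) x⟩` and `D := 2I₄ − 2M`, then `D` has eigenvalues `4, 4, 0, 0`:
its characteristic polynomial is `λ²(λ − 4)²`; equivalently `M² = I₄` and `trace M = 0`. -/
theorem quatRot_quadratic_form_eigenvalues
    (y x : EuclideanSpace ℝ (Fin 3)) (hy : ‖y‖ = 1) (hx : ‖x‖ = 1)
    (M : Matrix (Fin 4) (Fin 4) ℝ) (hMsymm : M.IsSymm)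
    (hM : ∀ w : Fin 4 → ℝ, ⟪y, Matrix.toEuclideanLin (quatRot w) x⟫ = w ⬝ᵥ M.mulVec w)
    (D : Matrix (Fin 4) (Fin 4) ℝ)
    (hD : D = (2 : ℝ) • (1 : Matrix (Fin 4) (Fin 4) ℝ) - (2 : ℝ) • M) :
    D.charpoly = X ^ 2 * (X - C 4) ^ 2 ∧ M * M = 1 ∧ M.trace = 0 := by
  have hx1 : x 0 ^ 2 + x 1 ^ 2 + x 2 ^ 2 = 1 := by
    have h := hx
    rw [EuclideanSpace.norm_eq, Real.sqrt_eq_one, Fin.sum_univ_three] at h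
    simpa [Real.norm_eq_abs, sq_abs] using h
  have hy1 : y 0 ^ 2 + y 1 ^ 2 + y 2 ^ 2 = 1 := by
    have h := hy
    rw [EuclideanSpace.norm_eq, Real.sqrt_eq_one, Fin.sum_univ_three] at h
    simpa [Real.norm_eq_abs, sq_abs] using h
  have h00 := hM ![1,0,0,0]
  have h11 := hM ![0,1,0,0]
  have h22 := hM ![0,0,1,0]
  have h33 := hM ![0,0,0,1]
  have h01 := hM ![1,1,0,0]
  have h02 := hM ![1,0,1,0]
  have h03 := hM ![1,0,0,1]
  have h12 := hM ![0,1,1,0]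
  have h13 := hM ![0,1,0,1]
  have h23 := hM ![0,0,1,1]
  simp only [quatRot, Matrix.toEuclideanLin_apply, PiLp.inner_apply, Matrix.mulVec,
    dotProduct, Fin.sum_univ_three, Fin.sum_univ_four, RCLike.inner_apply, conj_trivial,
    Matrix.cons_val', Matrix.cons_val_zero, Matrix.cons_val_one, Matrix.head_cons,
    Matrix.empty_val', Matrix.cons_val_fin_one, Matrix.head_fin_const, Matrix.cons_val_two,
    Matrix.tail_cons, PiLp.toLp_apply, WithLp.ofLp_toLp, Matrix.cons_val_three,
    Matrix.of_apply] at h00 h11 h22 h33 h01 h02 h03 h12 h13 h23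
  norm_num at h00 h11 h22 h33 h01 h02 h03 h12 h13 h23
  have f2 : (⟨2, by norm_num⟩ : Fin 4) = 2 := rfl
  have f3 : (⟨3, by norm_num⟩ : Fin 4) = 3 := rfl
  have hE : M = !![y 0 * x 0 + y 1 * x 1 + y 2 * x 2, -y 1 * x 2 + y 2 * x 1, y 0 * x 2 - y 2 * x 0, -y 0 * x 1 + y 1 * x 0;
      -y 1 * x 2 + y 2 * x 1, y 0 * x 0 - y 1 * x 1 - y 2 * x 2, y 0 * x 1 + y 1 * x 0, y 0 * x 2 + y 2 * x 0;
      y 0 * x 2 - y 2 * x 0, y 0 * x 1 + y 1 * x 0, -y 0 * x 0 + y 1 * x 1 - y 2 * x 2, y 1 * x 2 + y 2 * x 1;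
      -y 0 * x 1 + y 1 * x 0, y 0 * x 2 + y 2 * x 0, y 1 * x 2 + y 2 * x 1, -y 0 * x 0 - y 1 * x 1 + y 2 * x 2] := by
    ext i j
    fin_cases i <;> fin_cases j <;>
      simp [f2, f3, Matrix.vecHead, Matrix.vecTail]
    · linear_combination -h00
    · linear_combination (-1/2 : ℝ) * h01 + h00/2 + h11/2 - (hMsymm.apply 0 1)/2
    · linear_combination (-1/2 : ℝ) * h02 + h00/2 + h22/2 - (hMsymm.apply 0 2)/2
    · linear_combination (-1/2 : ℝ) * h03 + h00/2 + h33/2 - (hMsymm.apply 0 3)/2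
    · linear_combination (-1/2 : ℝ) * h01 + h00/2 + h11/2 + (hMsymm.apply 0 1)/2
    · linear_combination -h11
    · linear_combination (-1/2 : ℝ) * h12 + h11/2 + h22/2 - (hMsymm.apply 1 2)/2
    · linear_combination (-1/2 : ℝ) * h13 + h11/2 + h33/2 - (hMsymm.apply 1 3)/2
    · linear_combination (-1/2 : ℝ) * h02 + h00/2 + h22/2 + (hMsymm.apply 0 2)/2
    · linear_combination (-1/2 : ℝ) * h12 + h11/2 + h22/2 + (hMsymm.apply 1 2)/2
    · linear_combination -h22
    · linear_combination (-1/2 : ℝ) * h23 + h22/2 + h33/2 - (hMsymm.apply 2 3)/2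
    · linear_combination (-1/2 : ℝ) * h03 + h00/2 + h33/2 + (hMsymm.apply 0 3)/2
    · linear_combination (-1/2 : ℝ) * h13 + h11/2 + h33/2 + (hMsymm.apply 1 3)/2
    · linear_combination (-1/2 : ℝ) * h23 + h22/2 + h33/2 + (hMsymm.apply 2 3)/2
    · linear_combination -h33
  subst hE
  subst hD
  refine ⟨?_, ?_, ?_⟩
  · apply Polynomial.funext
    intro t
    rw [Matrix.charpoly, ← Polynomial.coe_evalRingHom, RingHom.map_det, my_det_fin_four]
    simp [Matrix.charmatrix_apply, Matrix.map_apply, Matrix.diagonal_apply, Matrix.sub_apply,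
      Matrix.smul_apply, Matrix.one_apply, Matrix.vecHead, Matrix.vecTail, smul_eq_mul]
    linear_combination ((y 0 ^ 2 + y 1 ^ 2 + y 2 ^ 2) *
        (16 * (x 0 ^ 2 + x 1 ^ 2 + x 2 ^ 2) - 8 * t ^ 2 + 32 * t - 16)) * hx1 +
      (16 * (x 0 ^ 2 + x 1 ^ 2 + x 2 ^ 2) ^ 2 * (y 0 ^ 2 + y 1 ^ 2 + y 2 ^ 2) -
        8 * t ^ 2 + 32 * t - 16) * hy1
  · ext i j
    fin_cases i <;> fin_cases j <;>
      simp [Matrix.mul_apply, Fin.sum_univ_four, Matrix.one_apply, f2, f3, Matrix.vecHead,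
        Matrix.vecTail] <;>
      first
        | linear_combination (y 0 ^ 2 + y 1 ^ 2 + y 2 ^ 2) * hx1 + hy1
        | linear_combination -((y 0 ^ 2 + y 1 ^ 2 + y 2 ^ 2) * hx1 + hy1)
        | ring
  · simp [Matrix.trace, Matrix.diag, Fin.sum_univ_four, Matrix.vecHead, Matrix.vecTail]
    ring
end

section
/- Let ℓ ≥ 1, let D : Fin ℓ → (4×4 real symmetric positive semidefinite matrices), let w* ∈ ℝ⁴ with ‖w*‖ = 1, and let I* ⊆ Fin ℓ with cardinality k*, 1 ≤ k* ≤ ℓ. Assume w*ᵀ Dᵢ w* = 0 for every i ∈ I* (noiseless inliers). Define h(w) := Σ_{i ∈ Fin ℓ} √(wᵀ Dᵢ w), dist(w, ±w*) := min{‖w − w*‖, ‖w + w*‖}, η_min := (1/k*) · inf over unit vectors w ∈ ℝ⁴ with ⟨w, w*⟩ = 0 of Σ_{i ∈ I*} √(wᵀ Dᵢ w), and η_max := (1/(ℓ − k*)) · sup over unit vectors w ∈ ℝ⁴ of Σ_{i ∉ I*} √(wᵀ Dᵢ w) (with η_max := 0 if k* = ℓ). If α* := k* η_min/√2 − (ℓ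 − k*) η_max > 0, then for every w ∈ ℝ⁴ with ‖w‖ = 1, h(w) − h(w*) ≥ α* · dist(w, ±w*); in particular ±w* is an α*-sharp minimum of h on the unit sphere of ℝ⁴. -/
open Matrix RealInnerProductSpace

namespace Matrix.PosSemidef

open scoped MatrixOrder in
lemma exists_sqrt_aux {M : Matrix (Fin 4) (Fin 4) ℝ} (hM : M.PosSemidef) :
    ∃ X : Matrix (Fin 4) (Fin 4) ℝ, IsSelfAdjoint X ∧ X * X = M := by
  obtain ⟨X, hX, -, hXX⟩ := CFC.exists_sqrt_of_isSelfAdjoint_of_quasispectrumRestricts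
    hM.isHermitian (QuasispectrumRestricts.nnreal_of_nonneg hM.nonneg)
  exact ⟨X, hX, hXX⟩

noncomputable def sqrt {M : Matrix (Fin 4) (Fin 4) ℝ} (hM : M.PosSemidef) :
    Matrix (Fin 4) (Fin 4) ℝ :=
  Classical.choose hM.exists_sqrt_aux

lemma sqrt_mul_self {M : Matrix (Fin 4) (Fin 4) ℝ} (hM : M.PosSemidef) :
    hM.sqrt * hM.sqrt = M :=
  (Classical.choose_spec hM.exists_sqrt_aux).2

lemma sqrt_isHermitian {M : Matrix (Fin 4) (Fin 4) ℝ} (hM : M.PosSemidef) :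
    hM.sqrt.IsHermitian :=
  (Classical.choose_spec hM.exists_sqrt_aux).1.isHermitian

end Matrix.PosSemidef

namespace SharpnessAux

/-- Euclidean (ℓ²) norm of a plain vector `Fin 4 → ℝ`. -/
noncomputable def En (v : Fin 4 → ℝ) : ℝ :=
  ‖((WithLp.equiv 2 (Fin 4 → ℝ)).symm v : EuclideanSpace ℝ (Fin 4))‖

lemma En_eq (v : Fin 4 → ℝ) : En v = Real.sqrt (v ⬝ᵥ v) := by
  rw [En, EuclideanSpace.norm_eq]
  congr 1
  simp [dotProduct, Real.norm_eq_abs, sq_abs, pow_two]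

lemma En_nonneg (v : Fin 4 → ℝ) : 0 ≤ En v := norm_nonneg _

lemma En_zero : En (0 : Fin 4 → ℝ) = 0 := by simp [En]

lemma En_eq_zero {v : Fin 4 → ℝ} (h : En v = 0) : v = 0 := by
  rw [En, norm_eq_zero] at h
  simpa using congrArg (WithLp.equiv 2 (Fin 4 → ℝ)) h

lemma En_smul (c : ℝ) (v : Fin 4 → ℝ) : En (c • v) = |c| * En v := by
  rw [En, En]
  rw [show (WithLp.equiv 2 (Fin 4 → ℝ)).symm (c • v)
      = c • (WithLp.equiv 2 (Fin 4 → ℝ)).symm v from rfl]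
  rw [norm_smul, Real.norm_eq_abs]

lemma En_neg (v : Fin 4 → ℝ) : En (-v) = En v := by
  have := En_smul (-1) v
  simpa using this

lemma En_sub_le (a b : Fin 4 → ℝ) : En a - En b ≤ En (a - b) := by
  rw [En, En, En]
  rw [show (WithLp.equiv 2 (Fin 4 → ℝ)).symm (a - b)
      = (WithLp.equiv 2 (Fin 4 → ℝ)).symm a - (WithLp.equiv 2 (Fin 4 → ℝ)).symm b from rfl]
  exact norm_sub_norm_le _ _

lemma form_sqrt {M : Matrix (Fin 4) (Fin 4) ℝ} (hM : M.PosSemidef) (w : Fin 4 → ℝ) :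
    Real.sqrt (w ⬝ᵥ M.mulVec w) = En (hM.sqrt.mulVec w) := by
  rw [En_eq]
  congr 1
  conv_lhs => rw [← hM.sqrt_mul_self]
  rw [← mulVec_mulVec, dotProduct_mulVec]
  congr 1
  have hsym : (hM.sqrt)ᵀ = hM.sqrt := by
    have := hM.sqrt_isHermitian
    simpa [Matrix.IsHermitian, Matrix.conjTranspose_eq_transpose_of_trivial] using this
  conv_lhs => rw [← hsym, vecMul_transpose]

lemma sqrt_mulVec_eq_zero {M : Matrix (Fin 4) (Fin 4) ℝ} (hM : M.PosSemidef)
    {w : Fin 4 → ℝ} (h0 : w ⬝ᵥ M.mulVec w = 0) : hM.sqrt.mulVec w = 0 := by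
  apply En_eq_zero
  rw [← form_sqrt hM, h0, Real.sqrt_zero]

lemma coord_abs_le_norm (x : EuclideanSpace ℝ (Fin 4)) (j : Fin 4) : |x j| ≤ ‖x‖ := by
  rw [EuclideanSpace.norm_eq]
  rw [show |x j| = Real.sqrt (‖x j‖ ^ 2) by rw [Real.sqrt_sq_eq_abs, Real.norm_eq_abs, abs_abs]]
  apply Real.sqrt_le_sqrt
  exact Finset.single_le_sum (f := fun i => ‖x i‖ ^ 2) (fun i _ => by positivity) (Finset.mem_univ j)

lemma form_le_entries_sum (M : Matrix (Fin 4) (Fin 4) ℝ) (w : EuclideanSpace ℝ (Fin 4))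
    (hw : ‖w‖ = 1) : w ⬝ᵥ M.mulVec w ≤ ∑ j : Fin 4, ∑ k : Fin 4, |M j k| := by
  rw [dotProduct]
  apply Finset.sum_le_sum
  intro j _
  rw [Matrix.mulVec, dotProduct, Finset.mul_sum]
  apply Finset.sum_le_sum
  intro k _
  calc w j * (M j k * w k) ≤ |w j * (M j k * w k)| := le_abs_self _
    _ = |w j| * |M j k| * |w k| := by rw [abs_mul, abs_mul]; ring
    _ ≤ |M j k| := by
        have h1 : |w j| ≤ 1 := (coord_abs_le_norm w j).trans_eq hw
        have h2 : |w k| ≤ 1 := (coord_abs_le_norm w k).trans_eq hw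
        calc |w j| * |M j k| * |w k| ≤ 1 * |M j k| * |w k| := by
              apply mul_le_mul_of_nonneg_right _ (abs_nonneg _)
              exact mul_le_mul_of_nonneg_right h1 (abs_nonneg _)
          _ = |M j k| * |w k| := by ring
          _ ≤ |M j k| * 1 := mul_le_mul_of_nonneg_left h2 (abs_nonneg _)
          _ = |M j k| := by ring

end SharpnessAux

set_option maxHeartbeats 1000000 in
/-- **Sharpness of the ground-truth quaternion.** If the inlier residual matrices vanish at
`w*` and `α* := k* η_min/√2 − (ℓ − k*) η_max > 0`, then for every unit quaternion `w`,
`h(w) − h(w*) ≥ α* · dist(w, ±w*)`, where `h(w) = Σᵢ √(wᵀ Dᵢ w)` and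
`dist(w, ±w*) = min{‖w − w*‖, ‖w + w*‖}`. -/
theorem sharpness_of_ground_truth
    (ℓ : ℕ) (hℓ : 1 ≤ ℓ)
    (D : Fin ℓ → Matrix (Fin 4) (Fin 4) ℝ)
    (hD : ∀ i, (D i).PosSemidef)
    (wstar : EuclideanSpace ℝ (Fin 4)) (hwstar : ‖wstar‖ = 1)
    (Istar : Finset (Fin ℓ)) (kstar : ℕ)
    (hkcard : kstar = Istar.card) (hk1 : 1 ≤ kstar)
    (hinlier : ∀ i ∈ Istar, wstar ⬝ᵥ (D i).mulVec wstar = 0)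
    (h : EuclideanSpace ℝ (Fin 4) → ℝ)
    (hh : ∀ w, h w = ∑ i : Fin ℓ, Real.sqrt (w ⬝ᵥ (D i).mulVec w))
    (ηmin : ℝ)
    (hηmin : ηmin = (kstar : ℝ)⁻¹ *
      sInf {s : ℝ | ∃ w : EuclideanSpace ℝ (Fin 4), ‖w‖ = 1 ∧ ⟪w, wstar⟫ = 0 ∧
        s = ∑ i ∈ Istar, Real.sqrt (w ⬝ᵥ (D i).mulVec w)})
    (ηmax : ℝ)
    (hηmax : ηmax = ((ℓ : ℝ) - (kstar : ℝ))⁻¹ *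
      sSup {s : ℝ | ∃ w : EuclideanSpace ℝ (Fin 4), ‖w‖ = 1 ∧
        s = ∑ i ∈ Istarᶜ, Real.sqrt (w ⬝ᵥ (D i).mulVec w)})
    (α : ℝ)
    (hα : α = (kstar : ℝ) * ηmin / Real.sqrt 2 - ((ℓ : ℝ) - (kstar : ℝ)) * ηmax)
    (hαpos : 0 < α) :
    ∀ w : EuclideanSpace ℝ (Fin 4), ‖w‖ = 1 →
      h w - h wstar ≥ α * min ‖w - wstar‖ ‖w + wstar‖ := by
  classical
  set Smin : Set ℝ := {s : ℝ | ∃ w : EuclideanSpace ℝ (Fin 4), ‖w‖ = 1 ∧ ⟪w, wstar⟫ = 0 ∧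
        s = ∑ i ∈ Istar, Real.sqrt (w ⬝ᵥ (D i).mulVec w)} with hSmindef
  set Smax : Set ℝ := {s : ℝ | ∃ w : EuclideanSpace ℝ (Fin 4), ‖w‖ = 1 ∧
        s = ∑ i ∈ Istarᶜ, Real.sqrt (w ⬝ᵥ (D i).mulVec w)} with hSmaxdef
  have hf : ∀ (i : Fin ℓ) (v : EuclideanSpace ℝ (Fin 4)),
      Real.sqrt (v ⬝ᵥ (D i).mulVec v) = SharpnessAux.En ((hD i).sqrt.mulVec v) :=
    fun i v => SharpnessAux.form_sqrt (hD i) v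
  have hSstar : ∀ i ∈ Istar, (hD i).sqrt.mulVec wstar = 0 :=
    fun i hi => SharpnessAux.sqrt_mulVec_eq_zero (hD i) (hinlier i hi)
  -- basic facts about Smin
  have hk0 : (0:ℝ) < (kstar:ℝ) := by exact_mod_cast hk1
  have hInfnn : 0 ≤ sInf Smin := by
    apply Real.sInf_nonneg
    rintro s ⟨w', -, -, rfl⟩
    exact Finset.sum_nonneg fun i _ => Real.sqrt_nonneg _
  have hbddb : BddBelow Smin := by
    refine ⟨0, ?_⟩
    rintro s ⟨w', -, -, rfl⟩
    exact Finset.sum_nonneg fun i _ => Real.sqrt_nonneg _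
  have hkmin : (kstar : ℝ) * ηmin = sInf Smin := by
    rw [hηmin]; field_simp
  have hsqrt2 : (0:ℝ) < Real.sqrt 2 := by positivity
  -- the key estimate for w in the half-space
  have key : ∀ w : EuclideanSpace ℝ (Fin 4), ‖w‖ = 1 → 0 ≤ ⟪w, wstar⟫ →
      α * ‖w - wstar‖ ≤ (∑ i : Fin ℓ, Real.sqrt (w ⬝ᵥ (D i).mulVec w)) -
        (∑ i : Fin ℓ, Real.sqrt (wstar ⬝ᵥ (D i).mulVec wstar)) := by
    intro w hw hc
    set c : ℝ := ⟪w, wstar⟫ with hcdef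
    have hc1 : c ≤ 1 := by
      have := real_inner_le_norm w wstar
      rw [hw, hwstar] at this; simpa using this
    have hd2 : ‖w - wstar‖ ^ 2 = 2 - 2 * c := by
      rw [norm_sub_sq_real, hw, hwstar, ← hcdef]; ring
    by_cases hceq : c = 1
    · have hww : w = wstar := by
        have h0 : ‖w - wstar‖ ^ 2 = 0 := by rw [hd2, hceq]; ring
        have h1 : ‖w - wstar‖ = 0 := by
          nlinarith [norm_nonneg (w - wstar)]
        exact sub_eq_zero.mp (norm_eq_zero.mp h1)
      rw [hww]
      simp
    · have hclt : c < 1 := lt_of_le_of_ne hc1 hceq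
      set d : ℝ := ‖w - wstar‖ with hddef
      have hd0 : 0 ≤ d := norm_nonneg _
      have hdpos : 0 < d := by nlinarith
      have h1c2 : 0 < 1 - c ^ 2 := by nlinarith
      set t : ℝ := Real.sqrt (1 - c ^ 2) with htdef
      have ht : 0 < t := Real.sqrt_pos.mpr h1c2
      have ht2 : t ^ 2 = 1 - c ^ 2 := Real.sq_sqrt h1c2.le
      set v : EuclideanSpace ℝ (Fin 4) := w - c • wstar with hvdef
      have hvnorm : ‖v‖ = t := by
        have h1 : ‖v‖ ^ 2 = 1 - c ^ 2 := by
          rw [hvdef, norm_sub_sq_real, hw, norm_smul, real_inner_smul_right, hwstar, ← hcdef]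
          rw [Real.norm_eq_abs, abs_of_nonneg hc]; ring
        rw [htdef, ← h1, Real.sqrt_sq (norm_nonneg v)]
      set u : EuclideanSpace ℝ (Fin 4) := t⁻¹ • v with hudef
      have hu : ‖u‖ = 1 := by
        rw [hudef, norm_smul, hvnorm, Real.norm_eq_abs, abs_of_pos (inv_pos.mpr ht),
          inv_mul_cancel₀ ht.ne']
      have huw : ⟪u, wstar⟫ = 0 := by
        rw [hudef, real_inner_smul_left, hvdef, inner_sub_left, real_inner_smul_left,
          real_inner_self_eq_norm_sq, hwstar, ← hcdef]
        ring
      have hw_decomp : (w : Fin 4 → ℝ) = c • (wstar : Fin 4 → ℝ) + t • (u : Fin 4 → ℝ) := by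
        have hde : w = c • wstar + t • u := by
          rw [hudef, smul_smul, mul_inv_cancel₀ ht.ne', one_smul, hvdef]
          abel
        rw [hde]
        rfl
      -- inlier sum
      have hinsum : ∑ i ∈ Istar, Real.sqrt (w ⬝ᵥ (D i).mulVec w)
          = t * ∑ i ∈ Istar, Real.sqrt (u ⬝ᵥ (D i).mulVec u) := by
        rw [Finset.mul_sum]
        refine Finset.sum_congr rfl fun i hi => ?_
        rw [hf i w, hf i u]
        have hmv : (hD i).sqrt.mulVec w = t • ((hD i).sqrt.mulVec u) := by
          rw [hw_decomp, mulVec_add, mulVec_smul, mulVec_smul, hSstar i hi]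
          simp
        rw [hmv, SharpnessAux.En_smul, abs_of_pos ht]
      have hmem : (∑ i ∈ Istar, Real.sqrt (u ⬝ᵥ (D i).mulVec u)) ∈ Smin := ⟨u, hu, huw, rfl⟩
      have hInf_le : sInf Smin ≤ ∑ i ∈ Istar, Real.sqrt (u ⬝ᵥ (D i).mulVec u) :=
        csInf_le hbddb hmem
      -- t ≥ d / √2
      have htd : d / Real.sqrt 2 ≤ t := by
        have h2 : (d / Real.sqrt 2) ^ 2 ≤ t ^ 2 := by
          rw [div_pow, Real.sq_sqrt (by norm_num : (0:ℝ) ≤ 2), ht2, hd2]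
          nlinarith
        calc d / Real.sqrt 2 = Real.sqrt ((d / Real.sqrt 2) ^ 2) :=
              (Real.sqrt_sq (by positivity)).symm
          _ ≤ Real.sqrt (t ^ 2) := Real.sqrt_le_sqrt h2
          _ = t := Real.sqrt_sq ht.le
      -- outlier per-term bound
      have hout1 : ∀ i : Fin ℓ,
          Real.sqrt (wstar ⬝ᵥ (D i).mulVec wstar) - Real.sqrt (w ⬝ᵥ (D i).mulVec w)
            ≤ Real.sqrt ((w - wstar) ⬝ᵥ (D i).mulVec (w - wstar)) := by
        intro i
        rw [hf i wstar, hf i w, show (w : Fin 4 → ℝ) - (wstar : Fin 4 → ℝ) = ((w - wstar : EuclideanSpace ℝ (Fin 4)) : Fin 4 → ℝ) from rfl, hf i (w - wstar)]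
        calc SharpnessAux.En ((hD i).sqrt.mulVec wstar) - SharpnessAux.En ((hD i).sqrt.mulVec w)
            ≤ SharpnessAux.En ((hD i).sqrt.mulVec wstar - (hD i).sqrt.mulVec w) :=
              SharpnessAux.En_sub_le _ _
          _ = SharpnessAux.En ((hD i).sqrt.mulVec ((w - wstar : EuclideanSpace ℝ (Fin 4)))) := by
              rw [show ((w - wstar : EuclideanSpace ℝ (Fin 4)) : Fin 4 → ℝ)
                  = (w : Fin 4 → ℝ) - (wstar : Fin 4 → ℝ) from rfl, mulVec_sub,
                ← SharpnessAux.En_neg]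
              congr 1
              abel
      -- outlier sum bound
      have houtsum : ∑ i ∈ Istarᶜ, Real.sqrt ((w - wstar) ⬝ᵥ (D i).mulVec (w - wstar))
          ≤ d * (((ℓ:ℝ) - kstar) * ηmax) := by
        rcases eq_or_ne Istarᶜ (∅ : Finset (Fin ℓ)) with hIc | hIc
        · have hkl : (kstar : ℝ) = (ℓ : ℝ) := by
            have hIu : Istar = Finset.univ := (Finset.compl_eq_empty_iff _).mp hIc
            rw [hkcard, hIu, Finset.card_univ, Fintype.card_fin]
          rw [hIc, hkl]
          simp
        · have hkl : (kstar:ℝ) < (ℓ:ℝ) := by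
            have h1 : Istar ≠ Finset.univ := by
              intro hE; apply hIc; rw [hE, Finset.compl_univ]
            have h2 : Istar.card < Fintype.card (Fin ℓ) :=
              (Finset.card_lt_iff_ne_univ _).mpr h1
            rw [Fintype.card_fin] at h2
            exact_mod_cast hkcard ▸ h2
          have hlk0 : (0:ℝ) < (ℓ:ℝ) - kstar := by linarith
          set u' : EuclideanSpace ℝ (Fin 4) := d⁻¹ • (w - wstar) with hu'def
          have hu' : ‖u'‖ = 1 := by
            rw [hu'def, norm_smul, Real.norm_eq_abs, abs_of_pos (inv_pos.mpr hdpos), ← hddef,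
              inv_mul_cancel₀ hdpos.ne']
          have hwd : ((w - wstar : EuclideanSpace ℝ (Fin 4)) : Fin 4 → ℝ)
              = d • (u' : Fin 4 → ℝ) := by
            have hde : (w - wstar : EuclideanSpace ℝ (Fin 4)) = d • u' := by
              rw [hu'def, smul_smul, mul_inv_cancel₀ hdpos.ne', one_smul]
            rw [hde]
            rfl
          have hterm : ∀ i : Fin ℓ, Real.sqrt ((w - wstar) ⬝ᵥ (D i).mulVec (w - wstar))
              = d * Real.sqrt (u' ⬝ᵥ (D i).mulVec u') := by
            intro i
            rw [show (w : Fin 4 → ℝ) - (wstar : Fin 4 → ℝ) = ((w - wstar : EuclideanSpace ℝ (Fin 4)) : Fin 4 → ℝ) from rfl, hf i (w - wstar), hf i u']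
            rw [show (hD i).sqrt.mulVec ((w - wstar : EuclideanSpace ℝ (Fin 4)))
                = d • ((hD i).sqrt.mulVec u') by rw [hwd, mulVec_smul]]
            rw [SharpnessAux.En_smul, abs_of_pos hdpos]
          have hbdda : BddAbove Smax := by
            refine ⟨∑ i ∈ Istarᶜ, Real.sqrt (∑ j : Fin 4, ∑ k : Fin 4, |D i j k|), ?_⟩
            rintro s ⟨w', hw', rfl⟩
            apply Finset.sum_le_sum
            intro i _
            exact Real.sqrt_le_sqrt (SharpnessAux.form_le_entries_sum (D i) w' hw')
          have hmem' : (∑ i ∈ Istarᶜ, Real.sqrt (u' ⬝ᵥ (D i).mulVec u')) ∈ Smax :=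
            ⟨u', hu', rfl⟩
          have hsup : ∑ i ∈ Istarᶜ, Real.sqrt (u' ⬝ᵥ (D i).mulVec u') ≤ sSup Smax :=
            le_csSup hbdda hmem'
          have hsupval : ((ℓ:ℝ) - kstar) * ηmax = sSup Smax := by
            rw [hηmax]; field_simp
          calc ∑ i ∈ Istarᶜ, Real.sqrt ((w - wstar) ⬝ᵥ (D i).mulVec (w - wstar))
              = d * ∑ i ∈ Istarᶜ, Real.sqrt (u' ⬝ᵥ (D i).mulVec u') := by
                rw [Finset.mul_sum]; exact Finset.sum_congr rfl fun i _ => hterm i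
            _ ≤ d * sSup Smax := mul_le_mul_of_nonneg_left hsup hd0
            _ = d * (((ℓ:ℝ) - kstar) * ηmax) := by rw [hsupval]
      -- assembly
      have hsplitw : ∑ i : Fin ℓ, Real.sqrt (w ⬝ᵥ (D i).mulVec w)
          = (∑ i ∈ Istar, Real.sqrt (w ⬝ᵥ (D i).mulVec w))
            + ∑ i ∈ Istarᶜ, Real.sqrt (w ⬝ᵥ (D i).mulVec w) :=
        (Finset.sum_add_sum_compl Istar _).symm
      have hsplitws : ∑ i : Fin ℓ, Real.sqrt (wstar ⬝ᵥ (D i).mulVec wstar)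
          = (∑ i ∈ Istar, Real.sqrt (wstar ⬝ᵥ (D i).mulVec wstar))
            + ∑ i ∈ Istarᶜ, Real.sqrt (wstar ⬝ᵥ (D i).mulVec wstar) :=
        (Finset.sum_add_sum_compl Istar _).symm
      have hAstar : ∑ i ∈ Istar, Real.sqrt (wstar ⬝ᵥ (D i).mulVec wstar) = 0 :=
        Finset.sum_eq_zero fun i hi => by rw [hinlier i hi, Real.sqrt_zero]
      have hB : ∑ i ∈ Istarᶜ, Real.sqrt (wstar ⬝ᵥ (D i).mulVec wstar)
            - ∑ i ∈ Istarᶜ, Real.sqrt (w ⬝ᵥ (D i).mulVec w)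
          ≤ d * (((ℓ:ℝ) - kstar) * ηmax) := by
        rw [← Finset.sum_sub_distrib]
        exact le_trans (Finset.sum_le_sum fun i _ => hout1 i) houtsum
      have key1 : d / Real.sqrt 2 * sInf Smin
          ≤ t * ∑ i ∈ Istar, Real.sqrt (u ⬝ᵥ (D i).mulVec u) := by
        calc d / Real.sqrt 2 * sInf Smin ≤ t * sInf Smin :=
              mul_le_mul_of_nonneg_right htd hInfnn
          _ ≤ t * ∑ i ∈ Istar, Real.sqrt (u ⬝ᵥ (D i).mulVec u) :=
              mul_le_mul_of_nonneg_left hInf_le ht.le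
      have hαd : α * d = d / Real.sqrt 2 * sInf Smin - d * (((ℓ:ℝ) - kstar) * ηmax) := by
        rw [hα, ← hkmin]
        field_simp
      rw [hsplitw, hsplitws, hAstar, hinsum]
      linarith [key1, hB, hαd]
  -- conclude
  intro w hw
  rw [ge_iff_le, hh, hh]
  by_cases hc : 0 ≤ ⟪w, wstar⟫
  · have hk := key w hw hc
    calc α * min ‖w - wstar‖ ‖w + wstar‖ ≤ α * ‖w - wstar‖ :=
          mul_le_mul_of_nonneg_left (min_le_left _ _) hαpos.le
      _ ≤ _ := hk
  · have hc' : 0 ≤ ⟪(-w : EuclideanSpace ℝ (Fin 4)), wstar⟫ := by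
      rw [inner_neg_left]
      push_neg at hc
      linarith
    have hk := key (-w) (by rw [norm_neg]; exact hw) hc'
    have hsumneg : ∑ i : Fin ℓ, Real.sqrt ((-w : EuclideanSpace ℝ (Fin 4)) ⬝ᵥ (D i).mulVec (-w))
        = ∑ i : Fin ℓ, Real.sqrt (w ⬝ᵥ (D i).mulVec w) := by
      refine Finset.sum_congr rfl fun i _ => ?_
      rw [show -(w : Fin 4 → ℝ) = ((-w : EuclideanSpace ℝ (Fin 4)) : Fin 4 → ℝ) from rfl, hf i (-w), hf i w,
        show ((-w : EuclideanSpace ℝ (Fin 4)) : Fin 4 → ℝ) = -(w : Fin 4 → ℝ) from rfl,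
        mulVec_neg, SharpnessAux.En_neg]
    have hnorm : ‖(-w : EuclideanSpace ℝ (Fin 4)) - wstar‖ = ‖w + wstar‖ := by
      rw [← norm_neg]
      congr 1
      abel
    calc α * min ‖w - wstar‖ ‖w + wstar‖ ≤ α * ‖w + wstar‖ :=
          mul_le_mul_of_nonneg_left (min_le_right _ _) hαpos.le
      _ = α * ‖(-w : EuclideanSpace ℝ (Fin 4)) - wstar‖ := by rw [hnorm]
      _ ≤ (∑ i : Fin ℓ, Real.sqrt ((-w : EuclideanSpace ℝ (Fin 4)) ⬝ᵥ (D i).mulVec (-w)))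
            - ∑ i : Fin ℓ, Real.sqrt (wstar ⬝ᵥ (D i).mulVec wstar) := hk
      _ = _ := by rw [hsumneg]
end

section
/- Let μ be the uniform probability measure on the unit sphere S³ = {z ∈ EuclideanSpace ℝ (Fin 4) : ‖z‖ = 1} (normalized 3-dimensional Hausdorff measure on the sphere). Then for every w ∈ EuclideanSpace ℝ (Fin 4) with ‖w‖ = 1, ∫∫ √(⟨z₁, w⟩² + ⟨z₂, w⟩²) dμ(z₁) dμ(z₂) ≤ 1/√2. -/
open MeasureTheory RealInnerProductSpace

local notation "E4" => EuclideanSpace ℝ (Fin 4)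

lemma exists_isometry_map_eq (v u : EuclideanSpace ℝ (Fin 4)) (h : ‖v‖ = ‖u‖) :
    ∃ g : EuclideanSpace ℝ (Fin 4) ≃ₗᵢ[ℝ] EuclideanSpace ℝ (Fin 4), g v = u := by
  rcases eq_or_ne v u with rfl | hne
  · exact ⟨LinearIsometryEquiv.refl ℝ _, rfl⟩
  · refine ⟨Submodule.reflection (ℝ ∙ (v - u))ᗮ, ?_⟩
    have hd : ‖v - u‖ ≠ 0 := by simpa [sub_eq_zero] using hne
    have hhalf : (⟪v - u, v⟫ / ((‖v - u‖ : ℝ) ^ 2)) = 1 / 2 := by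
      have h1 : (‖v - u‖ : ℝ) ^ 2 = ⟪v - u, v - u⟫ := (real_inner_self_eq_norm_sq _).symm
      have h2 : ⟪v - u, v - u⟫ = 2 * ⟪v - u, v⟫ := by
        have hvv : ⟪v, v⟫ = ⟪u, u⟫ := by
          rw [real_inner_self_eq_norm_sq, real_inner_self_eq_norm_sq, h]
        have hc := real_inner_comm v u
        simp only [inner_sub_left, inner_sub_right] at *
        linarith
      have hdpow : ((‖v - u‖ : ℝ) ^ 2) ≠ 0 := pow_ne_zero 2 hd
      rw [h1, h2] at hdpow ⊢
      rw [div_eq_iff hdpow]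
      ring
    rw [Submodule.reflection_orthogonal_apply, Submodule.reflection_singleton_apply]
    simp only [RCLike.ofReal_real_eq_id, id_eq]
    rw [hhalf]
    have h2s : (2:ℕ) • ((1 / 2 : ℝ) • (v - u)) = v - u := by
      rw [two_smul, ← add_smul]
      norm_num
    rw [h2s]
    abel


/-- **Jensen bound for the outlier contribution.** If `μ` is the uniform probability measure
on the unit sphere `S³ ⊂ ℝ⁴`, then for every unit vector `w`,
`∫∫ √(⟨z₁, w⟩² + ⟨z₂, w⟩²) dμ(z₁) dμ(z₂) ≤ 1/√2`. -/
theorem sphere_pair_expectation_le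
    (μ : Measure (EuclideanSpace ℝ (Fin 4)))
    (hμ : μ = (μH[(3 : ℝ)] (Metric.sphere (0 : EuclideanSpace ℝ (Fin 4)) 1))⁻¹ •
      (μH[(3 : ℝ)]).restrict (Metric.sphere (0 : EuclideanSpace ℝ (Fin 4)) 1)) :
    ∀ w : EuclideanSpace ℝ (Fin 4), ‖w‖ = 1 →
      ∫ z₁, ∫ z₂, Real.sqrt (⟪z₁, w⟫ ^ 2 + ⟪z₂, w⟫ ^ 2) ∂μ ∂μ ≤ 1 / Real.sqrt 2 := by
  intro w hw
  set S : Set (EuclideanSpace ℝ (Fin 4)) := Metric.sphere 0 1 with hSdef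
  set c : ENNReal := μH[(3 : ℝ)] S with hcdef
  by_cases hc0 : c = 0
  · have hz : μ = 0 := by
      rw [hμ, Measure.restrict_eq_zero.mpr hc0, smul_zero]
    simp only [hz, integral_zero_measure]
    positivity
  by_cases hcT : c = ⊤
  · have hz : μ = 0 := by
      rw [hμ, hcT, ENNReal.inv_top, zero_smul]
    simp only [hz, integral_zero_measure]
    positivity
  have hprob : IsProbabilityMeasure μ := by
    constructor
    rw [hμ, Measure.smul_apply, Measure.restrict_apply_univ, smul_eq_mul,
      ENNReal.inv_mul_cancel hc0 hcT]
  -- rotation invariance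
  have hinv : ∀ g : EuclideanSpace ℝ (Fin 4) ≃ₗᵢ[ℝ] EuclideanSpace ℝ (Fin 4),
      μ.map g = μ := by
    intro g
    have hgS : (⇑g) ⁻¹' S = S := by
      ext x
      simp [hSdef, mem_sphere_zero_iff_norm, g.norm_map]
    have hmapH : Measure.map (⇑g) μH[(3 : ℝ)] = μH[(3 : ℝ)] := by
      have := g.toIsometryEquiv.map_hausdorffMeasure (3 : ℝ)
      simpa using this
    rw [hμ, Measure.map_smul, ← hgS,
      ← Measure.restrict_map g.continuous.measurable
        (Metric.isClosed_sphere.measurableSet), hmapH, hgS]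
  -- substitution
  have hsub : ∀ (g : EuclideanSpace ℝ (Fin 4) ≃ₗᵢ[ℝ] EuclideanSpace ℝ (Fin 4))
      (f : EuclideanSpace ℝ (Fin 4) → ℝ), Continuous f →
      ∫ z, f z ∂μ = ∫ z, f (g z) ∂μ := by
    intro g f hf
    conv_lhs => rw [← hinv g]
    exact integral_map g.continuous.measurable.aemeasurable hf.aestronglyMeasurable
  -- a.e. membership in sphere
  have hae : ∀ᵐ z ∂μ, z ∈ S := by
    rw [hμ]
    refine Measure.ae_smul_measure ?_ _
    exact ae_restrict_mem Metric.isClosed_sphere.measurableSet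
  -- integrability of inner squares
  have hcont : ∀ v : EuclideanSpace ℝ (Fin 4),
      Continuous fun z : EuclideanSpace ℝ (Fin 4) => ⟪z, v⟫ ^ 2 :=
    fun v => (continuous_id.inner continuous_const).pow 2
  have hIint : ∀ v : EuclideanSpace ℝ (Fin 4), ‖v‖ = 1 →
      Integrable (fun z => ⟪z, v⟫ ^ 2) μ := by
    intro v hv
    refine (integrable_const (1 : ℝ)).mono' (hcont v).aestronglyMeasurable ?_
    filter_upwards [hae] with z hz
    have hz1 : ‖z‖ = 1 := by simpa [hSdef, mem_sphere_zero_iff_norm] using hz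
    have h1 : |⟪z, v⟫| ≤ 1 := by
      calc |⟪z, v⟫| ≤ ‖z‖ * ‖v‖ := abs_real_inner_le_norm z v
      _ = 1 := by rw [hz1, hv, mul_one]
    calc ‖⟪z, v⟫ ^ 2‖ = |⟪z, v⟫| ^ 2 := by rw [Real.norm_eq_abs, abs_pow, sq_abs, ← sq_abs]
    _ ≤ 1 := pow_le_one₀ (abs_nonneg _) h1
  -- all directions give the same integral
  set I : ℝ := ∫ z, ⟪z, w⟫ ^ 2 ∂μ with hIdef
  have hIv : ∀ v : EuclideanSpace ℝ (Fin 4), ‖v‖ = 1 →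
      ∫ z, ⟪z, v⟫ ^ 2 ∂μ = I := by
    intro v hv
    obtain ⟨g, hg⟩ := exists_isometry_map_eq w v (by rw [hw, hv])
    rw [hsub g _ (hcont v)]
    simp only [← hg, LinearIsometryEquiv.inner_map_map]
    exact hIdef.symm
  -- Parseval: sum over standard basis = 1
  have hnormsingle : ∀ i : Fin 4, ‖(EuclideanSpace.single i (1:ℝ))‖ = 1 := by
    intro i; rw [EuclideanSpace.norm_single]; norm_num
  have hsum : (4 : ℝ) * I = 1 := by
    have hs : ∑ i : Fin 4, ∫ z, ⟪z, EuclideanSpace.single i (1:ℝ)⟫ ^ 2 ∂μ = 1 := by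
      rw [← integral_finset_sum _ (fun i _ => hIint _ (hnormsingle i))]
      have : ∫ z, ∑ i : Fin 4, ⟪z, EuclideanSpace.single i (1:ℝ)⟫ ^ 2 ∂μ
          = ∫ _z, (1 : ℝ) ∂μ := by
        refine integral_congr_ae ?_
        filter_upwards [hae] with z hz
        have hz1 : ‖z‖ = 1 := by simpa [hSdef, mem_sphere_zero_iff_norm] using hz
        have hzi : ∀ i : Fin 4, ⟪z, EuclideanSpace.single i (1:ℝ)⟫ = z i := by
          intro i
          rw [EuclideanSpace.inner_single_right]
          simp
        simp_rw [hzi]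
        have := EuclideanSpace.norm_eq z
        rw [hz1] at this
        have h2 : ∑ i : Fin 4, ‖z i‖ ^ 2 = 1 := by
          have := Real.sqrt_eq_one.mp this.symm
          linarith [this]
        simpa [Real.norm_eq_abs, sq_abs] using h2
      rw [this, integral_const, probReal_univ]
      simp
    have : ∑ i : Fin 4, ∫ z, ⟪z, EuclideanSpace.single i (1:ℝ)⟫ ^ 2 ∂μ
        = ∑ _i : Fin 4, I := Finset.sum_congr rfl fun i _ => hIv _ (hnormsingle i)
    rw [this] at hs
    simpa [Finset.sum_const] using hs
  have hIval : I = 1 / 4 := by linarith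
  -- squares bounded on the sphere
  have hsq : ∀ z ∈ S, ⟪z, w⟫ ^ 2 ≤ 1 := by
    intro z hz
    have hz1 : ‖z‖ = 1 := by simpa [hSdef, mem_sphere_zero_iff_norm] using hz
    have habs : |⟪z, w⟫| ≤ 1 := by
      have := abs_real_inner_le_norm z w
      rwa [hz1, hw, one_mul] at this
    calc ⟪z, w⟫ ^ 2 = |⟪z, w⟫| ^ 2 := (sq_abs _).symm
    _ ≤ 1 := pow_le_one₀ (abs_nonneg _) habs
  -- a.e. membership for the product measure
  have hSm : MeasurableSet S := Metric.isClosed_sphere.measurableSet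
  have hmu0 : μ Sᶜ = 0 := by
    have := ae_iff.mp hae
    exact this
  have haeν : ∀ᵐ p : EuclideanSpace ℝ (Fin 4) × EuclideanSpace ℝ (Fin 4) ∂μ.prod μ,
      p.1 ∈ S ∧ p.2 ∈ S := by
    rw [ae_iff]
    have hbad : (μ.prod μ) ((Sᶜ ×ˢ (Set.univ : Set (EuclideanSpace ℝ (Fin 4)))) ∪
        ((Set.univ : Set (EuclideanSpace ℝ (Fin 4))) ×ˢ Sᶜ)) = 0 :=
      measure_union_null (by rw [Measure.prod_prod, hmu0, zero_mul])
        (by rw [Measure.prod_prod, hmu0, mul_zero])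
    refine measure_mono_null (fun p hp => ?_) hbad
    simp only [Set.mem_setOf_eq, not_and_or] at hp
    rcases hp with hp | hp
    · exact Or.inl (by simp [hp])
    · exact Or.inr (by simp [hp])
  -- integrability on the product
  have hFsumInt : Integrable
      (fun p : EuclideanSpace ℝ (Fin 4) × EuclideanSpace ℝ (Fin 4) =>
        ⟪p.1, w⟫ ^ 2 + ⟪p.2, w⟫ ^ 2) (μ.prod μ) := by
    refine (integrable_const (2 : ℝ)).mono'
      (((continuous_fst.inner continuous_const).pow 2).add
        ((continuous_snd.inner continuous_const).pow 2)).aestronglyMeasurable ?_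
    filter_upwards [haeν] with p hp
    rw [Real.norm_eq_abs, abs_of_nonneg (by positivity)]
    linarith [hsq _ hp.1, hsq _ hp.2]
  have hFsqrtInt : Integrable
      (fun p : EuclideanSpace ℝ (Fin 4) × EuclideanSpace ℝ (Fin 4) =>
        Real.sqrt (⟪p.1, w⟫ ^ 2 + ⟪p.2, w⟫ ^ 2)) (μ.prod μ) := by
    refine (integrable_const (Real.sqrt 2)).mono'
      (Real.continuous_sqrt.comp (((continuous_fst.inner continuous_const).pow 2).add
        ((continuous_snd.inner continuous_const).pow 2))).aestronglyMeasurable ?_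
    filter_upwards [haeν] with p hp
    rw [Real.norm_eq_abs, abs_of_nonneg (Real.sqrt_nonneg _)]
    exact Real.sqrt_le_sqrt (by linarith [hsq _ hp.1, hsq _ hp.2])
  -- value of the product integral
  have hFs : ∫ p, (⟪p.1, w⟫ ^ 2 + ⟪p.2, w⟫ ^ 2)
      ∂(μ.prod μ : Measure (EuclideanSpace ℝ (Fin 4) × EuclideanSpace ℝ (Fin 4))) = 1 / 2 := by
    rw [MeasureTheory.integral_prod _ hFsumInt]
    have hin : ∀ z₁ : EuclideanSpace ℝ (Fin 4),
        ∫ z₂, (⟪z₁, w⟫ ^ 2 + ⟪z₂, w⟫ ^ 2) ∂μ = ⟪z₁, w⟫ ^ 2 + I := by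
      intro z₁
      rw [integral_add (integrable_const _) (hIint w hw), integral_const]
      rw [← hIdef]
      simp only [probReal_univ, one_smul]
    simp_rw [hin]
    rw [integral_add (hIint w hw) (integrable_const I), integral_const, ← hIdef]
    simp only [probReal_univ, one_smul]
    rw [hIval]; norm_num
  -- Jensen
  have hjensen : ∫ p, Real.sqrt (⟪p.1, w⟫ ^ 2 + ⟪p.2, w⟫ ^ 2)
        ∂(μ.prod μ : Measure (EuclideanSpace ℝ (Fin 4) × EuclideanSpace ℝ (Fin 4)))
      ≤ Real.sqrt (∫ p, (⟪p.1, w⟫ ^ 2 + ⟪p.2, w⟫ ^ 2) ∂(μ.prod μ)) :=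
    Real.strictConcaveOn_sqrt.concaveOn.le_map_integral
      Real.continuous_sqrt.continuousOn isClosed_Ici
      (Filter.Eventually.of_forall fun p => Set.mem_Ici.mpr (by positivity)) hFsumInt hFsqrtInt
  have hswap : ∫ z₁, ∫ z₂, Real.sqrt (⟪z₁, w⟫ ^ 2 + ⟪z₂, w⟫ ^ 2) ∂μ ∂μ
      = ∫ p, Real.sqrt (⟪p.1, w⟫ ^ 2 + ⟪p.2, w⟫ ^ 2)
        ∂(μ.prod μ : Measure (EuclideanSpace ℝ (Fin 4) × EuclideanSpace ℝ (Fin 4))) :=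
    (MeasureTheory.integral_prod _ hFsqrtInt).symm
  rw [hswap]
  refine hjensen.trans ?_
  rw [hFs, show (1 : ℝ) / 2 = (2 : ℝ)⁻¹ by norm_num, Real.sqrt_inv, one_div]
end

section
/- Let v = (v₁, v₂, v₃) ∈ ℝ³, φ ∈ [0, π], and c ≥ 0. Set a₁ := v₁ cos φ + v₂ sin φ and assume a₁ ≥ 0 and (a₁, v₃) ≠ (0, 0). Let r := √(a₁² + v₃²), a₂ := arccos(v₃/r) ∈ [0, π], c̄ := min{1, c/r}, a₃ := arccos(−c̄), a₄ := arccos(c̄). Then for every θ ∈ [0, π], with b(θ) := (sin θ cos φ, sin θ sin φ, cos θ), one has |⟨v, b(θ)⟩| ≤ c if and only if θ ∈ [a₂ − a₃, a₂ − a₄] ∪ [a₂ + a₄, a₂ + a₃]. -/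
open Real RealInnerProductSpace

/-! With `r = √(a₁² + v₃²)` and `a₂ = arccos (v₃ / r)`, harmonic addition gives
`⟨v, b(θ)⟩ = a₁ sin θ + v₃ cos θ = r cos (θ - a₂)`, so the constraint is `|cos (θ - a₂)| ≤ c̄`.
Since `|θ - a₂| ≤ π` and `cos` is decreasing on `[0, π]` with inverse `arccos`, this means
`arccos c̄ ≤ |θ - a₂| ≤ arccos (-c̄)`, i.e. `θ - a₂` lies in `±[a₄, a₃]`. -/

lemma inner_toLp_three (v : EuclideanSpace ℝ (Fin 3)) (x y z : ℝ) :
    ⟪v, (WithLp.toLp 2 ![x, y, z] : EuclideanSpace ℝ (Fin 3))⟫ = v 0 * x + v 1 * y + v 2 * z := by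
  simp [PiLp.inner_apply, Fin.sum_univ_three]
  ring

lemma mul_sin_add_mul_cos_eq {a : ℝ} (ha : 0 ≤ a) (b θ : ℝ) :
    a * sin θ + b * cos θ = √(a ^ 2 + b ^ 2) * cos (θ - arccos (b / √(a ^ 2 + b ^ 2))) := by
  rcases (add_nonneg (sq_nonneg a) (sq_nonneg b)).eq_or_lt with hab | hab
  · obtain ⟨rfl, rfl⟩ : a = 0 ∧ b = 0 := ⟨by nlinarith, by nlinarith⟩
    simp
  have hr0 : 0 < √(a ^ 2 + b ^ 2) := sqrt_pos.2 hab
  have hr2 : √(a ^ 2 + b ^ 2) ^ 2 = a ^ 2 + b ^ 2 := sq_sqrt hab.le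
  set r := √(a ^ 2 + b ^ 2)
  have hbr : |b / r| ≤ 1 := by
    rw [abs_div, abs_of_pos hr0, div_le_one hr0]
    exact abs_le_sqrt (le_add_of_nonneg_left (sq_nonneg a))
  have hcos : cos (arccos (b / r)) = b / r := cos_arccos (abs_le.1 hbr).1 (abs_le.1 hbr).2
  have hsin : sin (arccos (b / r)) = a / r := by
    rw [sin_arccos, ← sqrt_sq (div_nonneg ha hr0.le)]
    congr 1
    field_simp
    linarith
  rw [cos_sub, hcos, hsin]
  field_simp
  ring

lemma mul_abs_le_iff_abs_le_min {r y : ℝ} (hr : 0 < r) (hy : |y| ≤ 1) (c : ℝ) :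
    r * |y| ≤ c ↔ |y| ≤ min 1 (c / r) := by
  rw [le_min_iff, le_div_iff₀' hr]
  exact (and_iff_right hy).symm

lemma arccos_le_iff_cos_le {s y : ℝ} (hs : s ∈ Set.Icc (-1) 1) (hy : y ∈ Set.Icc 0 π) :
    arccos s ≤ y ↔ cos y ≤ s := by
  conv_lhs => rw [← arccos_cos hy.1 hy.2]
  exact strictAntiOn_arccos.le_iff_ge hs ⟨neg_one_le_cos y, cos_le_one y⟩

lemma le_arccos_iff_le_cos {s y : ℝ} (hs : s ∈ Set.Icc (-1) 1) (hy : y ∈ Set.Icc 0 π) :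
    y ≤ arccos s ↔ s ≤ cos y := by
  conv_lhs => rw [← arccos_cos hy.1 hy.2]
  exact strictAntiOn_arccos.le_iff_ge ⟨neg_one_le_cos y, cos_le_one y⟩ hs

lemma abs_cos_le_iff {t x : ℝ} (ht : |t| ≤ 1) (hx : |x| ≤ π) :
    |cos x| ≤ t ↔ arccos t ≤ |x| ∧ |x| ≤ arccos (-t) := by
  have hx' : |x| ∈ Set.Icc 0 π := ⟨abs_nonneg x, hx⟩
  have ht' : t ∈ Set.Icc (-1) 1 := abs_le.1 ht
  have hnt' : -t ∈ Set.Icc (-1) 1 := abs_le.1 ((abs_neg t).trans_le ht)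
  rw [arccos_le_iff_cos_le ht' hx', le_arccos_iff_le_cos hnt' hx', cos_abs, abs_le, and_comm]

lemma le_abs_sub_and_abs_sub_le_iff {p q θ a : ℝ} (hp : 0 ≤ p) :
    p ≤ |θ - a| ∧ |θ - a| ≤ q ↔ (a - q ≤ θ ∧ θ ≤ a - p) ∨ (a + p ≤ θ ∧ θ ≤ a + q) := by
  rcases abs_cases (θ - a) with ⟨h, _⟩ | ⟨h, _⟩ <;> rw [h]
  · constructor
    · rintro ⟨h₁, h₂⟩; exact Or.inr ⟨by linarith, by linarith⟩
    · rintro (⟨h₁, h₂⟩ | ⟨h₁, h₂⟩) <;> constructor <;> linarith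
  · constructor
    · rintro ⟨h₁, h₂⟩; exact Or.inl ⟨by linarith, by linarith⟩
    · rintro (⟨h₁, h₂⟩ | ⟨h₁, h₂⟩) <;> constructor <;> linarith

theorem axis_constraint_interval_characterization_general
    (v : EuclideanSpace ℝ (Fin 3)) (φ : ℝ)
    (c : ℝ) (hc : 0 ≤ c)
    (a₁ : ℝ) (ha₁def : a₁ = v 0 * Real.cos φ + v 1 * Real.sin φ)
    (ha₁ : 0 ≤ a₁) (hne : ¬(a₁ = 0 ∧ v 2 = 0))
    (r : ℝ) (hr : r = Real.sqrt (a₁ ^ 2 + (v 2) ^ 2))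
    (a₂ : ℝ) (ha₂ : a₂ = Real.arccos (v 2 / r))
    (cbar : ℝ) (hcbar : cbar = min 1 (c / r))
    (a₃ : ℝ) (ha₃ : a₃ = Real.arccos (-cbar))
    (a₄ : ℝ) (ha₄ : a₄ = Real.arccos cbar) :
    ∀ θ : ℝ, 0 ≤ θ → θ ≤ π →
      (|⟪v, (WithLp.toLp 2 ![Real.sin θ * Real.cos φ, Real.sin θ * Real.sin φ, Real.cos θ] :
          EuclideanSpace ℝ (Fin 3))⟫| ≤ c ↔
        (a₂ - a₃ ≤ θ ∧ θ ≤ a₂ - a₄) ∨ (a₂ + a₄ ≤ θ ∧ θ ≤ a₂ + a₃)) := by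
  intro θ hθ0 hθπ
  have hr0 : 0 < r := by
    rw [hr, sqrt_pos]
    refine (by positivity : (0 : ℝ) ≤ _).lt_of_ne (Ne.symm fun h => hne ?_)
    simpa using (add_eq_zero_iff_of_nonneg (sq_nonneg a₁) (sq_nonneg (v 2))).1 h
  have hinner : ⟪v, (WithLp.toLp 2 ![sin θ * cos φ, sin θ * sin φ, cos θ] :
      EuclideanSpace ℝ (Fin 3))⟫ = a₁ * sin θ + v 2 * cos θ := by
    rw [inner_toLp_three, ha₁def]; ring
  have hcbar1 : |cbar| ≤ 1 := by
    rw [hcbar, abs_of_nonneg (le_min zero_le_one (div_nonneg hc hr0.le))]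
    exact min_le_left _ _
  have hθa₂ : |θ - a₂| ≤ π := abs_sub_le_iff.2
    ⟨by linarith [ha₂ ▸ arccos_nonneg (v 2 / r)], by linarith [ha₂ ▸ arccos_le_pi (v 2 / r)]⟩
  rw [hinner, mul_sin_add_mul_cos_eq ha₁, ← hr, ← ha₂, abs_mul, abs_of_pos hr0,
    mul_abs_le_iff_abs_le_min hr0 (abs_cos_le_one _), ← hcbar, abs_cos_le_iff hcbar1 hθa₂,
    ← ha₃, ← ha₄, le_abs_sub_and_abs_sub_le_iff (ha₄ ▸ arccos_nonneg cbar)]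

/-- **Interval characterization for axis consensus.** With `b(θ)` the unit vector of
spherical angles `(θ, φ)`, the constraint `|⟨v, b(θ)⟩| ≤ c` on `θ ∈ [0, π]` holds exactly on
the union of the two closed intervals `[a₂ − a₃, a₂ − a₄]` and `[a₂ + a₄, a₂ + a₃]`. -/
theorem axis_constraint_interval_characterization
    (v : EuclideanSpace ℝ (Fin 3)) (φ : ℝ) (hφ0 : 0 ≤ φ) (hφπ : φ ≤ π)
    (c : ℝ) (hc : 0 ≤ c)
    (a₁ : ℝ) (ha₁def : a₁ = v 0 * Real.cos φ + v 1 * Real.sin φ)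
    (ha₁ : 0 ≤ a₁) (hne : ¬(a₁ = 0 ∧ v 2 = 0))
    (r : ℝ) (hr : r = Real.sqrt (a₁ ^ 2 + (v 2) ^ 2))
    (a₂ : ℝ) (ha₂ : a₂ = Real.arccos (v 2 / r))
    (cbar : ℝ) (hcbar : cbar = min 1 (c / r))
    (a₃ : ℝ) (ha₃ : a₃ = Real.arccos (-cbar))
    (a₄ : ℝ) (ha₄ : a₄ = Real.arccos cbar) :
    ∀ θ : ℝ, 0 ≤ θ → θ ≤ π →
      (|⟪v, (WithLp.toLp 2 ![Real.sin θ * Real.cos φ, Real.sin θ * Real.sin φ, Real.cos θ] :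
          EuclideanSpace ℝ (Fin 3))⟫| ≤ c ↔
        (a₂ - a₃ ≤ θ ∧ θ ≤ a₂ - a₄) ∨ (a₂ + a₄ ≤ θ ∧ θ ≤ a₂ + a₃)) :=
  axis_constraint_interval_characterization_general v φ c hc a₁ ha₁def ha₁ hne r hr a₂ ha₂ cbar
    hcbar a₃ ha₃ a₄ ha₄
end
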